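/- Let p = [2^{2k}, 1^{2n−4k+1}] be a partition of 2n+1 (type B spherical orbit, k ≠ n/2). The partitions q of 2n+1 with at most 2 distinct parts such that the B-collapse of q^t equals p are exactly q = [2n−2k+1, 2k] and q = [2n−2k, 2k+1]. -/

import Mathlib

/-- The transpose (conjugate) of a partition, given as a multiset of parts. -/
def conjugatePartition (a : Multiset ℕ) : Multiset ℕ :=
  ((Multiset.range a.sum).map (fun i => Multiset.card (a.filter (fun p => i < p)))).filter
    (fun x => 0 < x)

/-- Dominance order on partitions given as multisets of parts:
`a` is dominated by `b`. -/
def domLe (a b : Multiset ℕ) : Prop :=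
  ∀ k : ℕ, (((a.sort (· ≤ ·)).reverse.take k).sum ≤ ((b.sort (· ≤ ·)).reverse.take k).sum)

/-- Type B condition: every even part occurs with even multiplicity. -/
def typeBPartition (a : Multiset ℕ) : Prop :=
  ∀ p : ℕ, Even p → Even (a.count p)

/-- `r` is the B-collapse of `q`: the largest partition of the same number
dominated by `q` in which every even part occurs with even multiplicity. -/
def isBCollapse (q r : Multiset ℕ) : Prop :=
  r.sum = q.sum ∧ (∀ x ∈ r, 0 < x) ∧ typeBPartition r ∧ domLe r q ∧
  ∀ s : Multiset ℕ, (∀ x ∈ s, 0 < x) → s.sum = q.sum → typeBPartition s → domLe s q →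
    domLe s r

/-!
The largest part of `qᵗ` is the number of parts of `q`. The collapse `p = [2^{2k}, 1^…]` has
largest part `2`; since dominance compares largest parts, `qᵗ` has a part `≥ 2`, and it has no
part `≥ 3`, because the hook `[3, 1^{2n-2}]` is of type B and dominated by `qᵗ`, hence by `p`.
So `q = {a, b}` has exactly two parts and `qᵗ = [2^b, 1^{a-b}]`. The B-collapse of `[2^b, 1^m]`
merely lowers `b` to an even number, so `b ∈ {2k, 2k+1}`.
-/

open Multiset

def partialSum (a : Multiset ℕ) (j : ℕ) : ℕ := ((a.sort (· ≤ ·)).reverse.take j).sum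

lemma domLe_iff_partialSum_le {a b : Multiset ℕ} :
    domLe a b ↔ ∀ j, partialSum a j ≤ partialSum b j :=
  Iff.rfl

lemma sort_replicate_add_replicate {α : Type*} [LinearOrder α] {A B : α} {x y : ℕ} (h : B ≤ A) :
    (replicate x A + replicate y B).sort (· ≤ ·) = List.replicate y B ++ List.replicate x A := by
  have hcoe : replicate x A + replicate y B = ↑(List.replicate y B ++ List.replicate x A) := by
    rw [← coe_add, add_comm, coe_replicate, coe_replicate]
  rw [hcoe, coe_sort]
  apply List.mergeSort_eq_self
  simp [List.pairwise_append, List.pairwise_replicate, h]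

lemma partialSum_replicate_add_replicate {A B x y : ℕ} (h : B ≤ A) (j : ℕ) :
    partialSum (replicate x A + replicate y B) j = A * min j x + B * min (j - x) y := by
  simp [partialSum, sort_replicate_add_replicate h, List.take_append, mul_comm]

lemma partialSum_one_eq_sup (s : Multiset ℕ) : partialSum s 1 = s.sup := by
  apply le_antisymm
  · have hle : ∀ y ∈ (s.sort (· ≤ ·)).reverse.take 1, y ≤ s.sup := fun y hy =>
      le_sup (by simpa using List.mem_of_mem_take hy)
    calc partialSum s 1 ≤ ((s.sort (· ≤ ·)).reverse.take 1).length • s.sup :=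
          List.sum_le_card_nsmul _ _ hle
      _ ≤ s.sup := by simpa using Nat.mul_le_mul_right s.sup (min_le_left 1 (card s))
  · refine sup_le.2 fun y hy => ?_
    have hdesc : (s.sort (· ≤ ·)).reverse.Pairwise (· ≥ ·) :=
      List.pairwise_reverse.2 (pairwise_sort _ _)
    have hmem : y ∈ (s.sort (· ≤ ·)).reverse := by simpa using hy
    rw [partialSum]
    rcases h : (s.sort (· ≤ ·)).reverse with _ | ⟨z, t⟩
    · simp [h] at hmem
    · rw [h] at hmem hdesc
      rcases List.mem_cons.1 hmem with rfl | hyt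
      · simp
      · simpa using List.rel_of_pairwise_cons hdesc hyt

lemma domLe.sup_le {a b : Multiset ℕ} (h : domLe a b) : a.sup ≤ b.sup := by
  rw [← partialSum_one_eq_sup, ← partialSum_one_eq_sup]
  exact h 1

lemma domLe_hook {s : Multiset ℕ} {x : ℕ} (hpos : ∀ y ∈ s, 0 < y) (hx : 1 ≤ x) (hxs : x ≤ s.sup) :
    domLe (replicate 1 x + replicate (s.sum - x) 1) s := by
  rw [domLe_iff_partialSum_le]
  intro j
  rw [← partialSum_one_eq_sup] at hxs
  rw [partialSum_replicate_add_replicate hx]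
  have hsum : ((s.sort (· ≤ ·)).reverse).sum = s.sum := by
    rw [List.sum_reverse, ← sum_coe, sort_eq]
  have hone : ∀ y ∈ (s.sort (· ≤ ·)).reverse, 1 ≤ y := fun y hy => hpos y (by simpa using hy)
  rcases j with _ | i
  · simp
  rw [partialSum] at hxs ⊢
  rcases h : (s.sort (· ≤ ·)).reverse with _ | ⟨z, t⟩
  · rw [h, List.take_nil, List.sum_nil] at hxs
    omega
  rw [h] at hsum hone hxs
  simp only [List.take_succ_cons, List.take_zero, List.sum_cons, List.sum_nil, add_zero]
    at hsum hxs ⊢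
  have hlen : min i t.length ≤ (t.take i).sum := by
    simpa using List.length_le_sum_of_one_le _ fun y hy =>
      hone y (List.mem_cons_of_mem z (List.mem_of_mem_take hy))
  have htake : t.length ≤ i → (t.take i).sum = t.sum := fun hi => by rw [List.take_of_length_le hi]
  rw [show min (i + 1) 1 = 1 by omega]
  omega

lemma typeBPartition_replicate_add_replicate_one {A x y : ℕ} (h : Even A → Even x) :
    typeBPartition (replicate x A + replicate y 1) := by
  intro p hp
  rw [count_add, count_replicate, count_replicate,
    if_neg (show ¬1 = p by rintro rfl; exact Nat.not_even_one hp), add_zero]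
  split_ifs with hA
  · exact h (hA ▸ hp)
  · exact Even.zero

lemma eq_replicate_two_add_replicate_one {s : Multiset ℕ} (hpos : ∀ x ∈ s, 0 < x)
    (hle : ∀ x ∈ s, x ≤ 2) : s = replicate (s.count 2) 2 + replicate (s.count 1) 1 := by
  ext p
  rw [count_add, count_replicate, count_replicate]
  by_cases hp : p = 1 ∨ p = 2
  · rcases hp with rfl | rfl <;> simp
  · have hps : p ∉ s := fun hps => hp (by have := hpos p hps; have := hle p hps; omega)
    rw [count_eq_zero.2 hps, if_neg (by omega), if_neg (by omega)]

lemma sum_replicate_add_replicate_one (A x y : ℕ) :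
    (replicate x A + replicate y 1).sum = x * A + y := by
  simp

lemma pos_of_mem_replicate_add_replicate_one {A x y z : ℕ} (hA : 0 < A)
    (hz : z ∈ replicate x A + replicate y 1) : 0 < z := by
  rcases mem_add.1 hz with hz | hz <;> rw [eq_of_mem_replicate hz] <;> omega

lemma domLe_two_one_iff {t m t' m' : ℕ} (h : 2 * t + m = 2 * t' + m') :
    domLe (replicate t 2 + replicate m 1) (replicate t' 2 + replicate m' 1) ↔ t ≤ t' := by
  simp only [domLe_iff_partialSum_le, partialSum_replicate_add_replicate one_le_two]
  refine ⟨fun hdom => ?_, fun ht j => by omega⟩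
  have := hdom t
  omega

lemma isBCollapse_two_one_iff {b m t m' : ℕ} (ht : Even t) (hsum : 2 * t + m' = 2 * b + m) :
    isBCollapse (replicate b 2 + replicate m 1) (replicate t 2 + replicate m' 1) ↔
      b = t ∨ b = t + 1 := by
  obtain ⟨w, rfl⟩ := ht
  simp only [isBCollapse, sum_replicate_add_replicate_one]
  constructor
  · rintro ⟨-, -, -, hdom, hmax⟩
    have hle : w + w ≤ b := (domLe_two_one_iff (by omega)).1 hdom
    obtain ⟨c, hc⟩ := Nat.even_or_odd' b
    have hcollapse := hmax (replicate (2 * c) 2 + replicate (m + 2 * (b - 2 * c)) 1)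
      (fun z => pos_of_mem_replicate_add_replicate_one two_pos)
      (by rw [sum_replicate_add_replicate_one]; omega)
      (typeBPartition_replicate_add_replicate_one fun _ => even_two_mul c)
      ((domLe_two_one_iff (by omega)).2 (by omega))
    have := (domLe_two_one_iff (by omega)).1 hcollapse
    omega
  · intro hb
    refine ⟨by omega, fun z => pos_of_mem_replicate_add_replicate_one two_pos,
      typeBPartition_replicate_add_replicate_one fun _ => ⟨w, rfl⟩,
      (domLe_two_one_iff (by omega)).2 (by omega), fun s hpos hs htB hdom => ?_⟩
    have hle : ∀ x ∈ s, x ≤ 2 := fun x hx => by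
      have h := (le_sup hx).trans hdom.sup_le
      rw [← partialSum_one_eq_sup, partialSum_replicate_add_replicate one_le_two] at h
      omega
    obtain ⟨c, hc⟩ := htB 2 even_two
    rw [eq_replicate_two_add_replicate_one hpos hle] at hs hdom ⊢
    rw [sum_replicate_add_replicate_one] at hs
    rw [domLe_two_one_iff (by omega)] at hdom ⊢
    omega

lemma three_le_sup_of_isBCollapse {s r : Multiset ℕ} (h : isBCollapse s r) (hpos : ∀ y ∈ s, 0 < y)
    (hs : 3 ≤ s.sup) : 3 ≤ r.sup := by
  obtain ⟨-, -, -, -, hmax⟩ := h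
  have hsum : 3 ≤ s.sum := hs.trans (sup_le.2 fun _ hy => le_sum_of_mem hy)
  have hhook := hmax _ (fun z => pos_of_mem_replicate_add_replicate_one three_pos)
    (by rw [sum_replicate_add_replicate_one]; omega)
    (typeBPartition_replicate_add_replicate_one fun h3 => absurd h3 (by decide))
    (domLe_hook hpos (by norm_num) hs)
  have h1 := hhook.sup_le
  rw [← partialSum_one_eq_sup, partialSum_replicate_add_replicate (by norm_num)] at h1
  simpa using h1

lemma sup_conjugatePartition {q : Multiset ℕ} (hpos : ∀ x ∈ q, 0 < x) :
    (conjugatePartition q).sup = card q := by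
  refine le_antisymm (sup_le.2 fun x hx => ?_) ?_
  · obtain ⟨i, -, rfl⟩ := mem_map.1 (mem_filter.1 hx).1
    exact card_le_card (filter_le _ q)
  · rcases eq_or_ne q 0 with rfl | hq
    · simp
    · apply le_sup
      obtain ⟨x, hx⟩ := exists_mem_of_ne_zero hq
      refine mem_filter.2 ⟨mem_map.2 ⟨0, ?_, ?_⟩, card_pos.2 hq⟩
      · exact mem_range.2 ((hpos x hx).trans_le (le_sum_of_mem hx))
      · rw [filter_eq_self.2 hpos]

lemma conjugatePartition_pair {a b : ℕ} (h : b ≤ a) :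
    conjugatePartition {a, b} = replicate b 2 + replicate (a - b) 1 := by
  have hcount : ∀ i, card (({a, b} : Multiset ℕ).filter (i < ·)) =
      (if i < a then 1 else 0) + (if i < b then 1 else 0) := fun i => by
    rw [insert_eq_cons, filter_cons, filter_singleton]
    split_ifs <;> simp
  have hconst : ∀ (n c : ℕ) (g : ℕ → ℕ), (∀ i < n, g i = c) →
      (range n).map g = replicate n c := fun n c g hg => by
    rw [map_congr rfl fun i hi => hg i (mem_range.1 hi), map_const', card_range]
  have hsum : ({a, b} : Multiset ℕ).sum = b + (a - b) + b := by
    rw [insert_eq_cons, sum_cons, sum_singleton]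
    omega
  rw [conjugatePartition, hsum, range_add, range_add, map_add, map_add, map_map, map_map,
    hconst b 2 _ fun i hi => ?_, hconst (a - b) 1 _ fun i hi => ?_, hconst b 0 _ fun i hi => ?_]
  · rw [filter_add, filter_add, filter_eq_self.2, filter_eq_self.2, filter_eq_nil.2, add_zero] <;>
      intro x hx <;> simp [eq_of_mem_replicate hx]
  all_goals simp only [Function.comp_apply, hcount]; split_ifs <;> omega

lemma card_eq_two_of_isBCollapse_conjugatePartition {q r : Multiset ℕ}
    (hpos : ∀ x ∈ q, 0 < x) (h : isBCollapse (conjugatePartition q) r) (hr : r.sup = 2) :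
    card q = 2 := by
  have hsup := sup_conjugatePartition hpos
  have hle : card q ≤ 2 := by
    by_contra hgt
    have := three_le_sup_of_isBCollapse h (fun _ hy => (mem_filter.1 hy).2) (by omega)
    omega
  have hge : r.sup ≤ (conjugatePartition q).sup := h.2.2.2.1.sup_le
  omega

lemma isBCollapse_conjugatePartition_pair_iff {a b t m : ℕ} (hba : b ≤ a) (ht : Even t)
    (hsum : 2 * t + m = a + b) :
    isBCollapse (conjugatePartition {a, b}) (replicate t 2 + replicate m 1) ↔
      b = t ∨ b = t + 1 := by
  rw [conjugatePartition_pair hba]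
  exact isBCollapse_two_one_iff ht (by omega)

lemma exists_eq_pair_of_card_eq_two {α : Type*} [LinearOrder α] {q : Multiset α}
    (h : card q = 2) : ∃ a b, b ≤ a ∧ q = {a, b} := by
  obtain ⟨x, y, rfl⟩ := card_eq_two.1 h
  rcases le_total y x with hyx | hxy
  · exact ⟨x, y, hyx, rfl⟩
  · exact ⟨y, x, hxy, pair_comm x y⟩

theorem stmt_7_general (n k : ℕ) (hk : 1 ≤ k) (hkn : 2 * k ≤ n) (hne : 2 * k ≠ n)
    (q : Multiset ℕ) (hqpos : ∀ x ∈ q, 0 < x) (hqsum : q.sum = 2 * n + 1) :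
    isBCollapse (conjugatePartition q)
        (Multiset.replicate (2 * k) 2 + Multiset.replicate (2 * n - 4 * k + 1) 1) ↔
      (q = {2 * n - 2 * k + 1, 2 * k} ∨ q = {2 * n - 2 * k, 2 * k + 1}) := by
  have hcollapse_pair : ∀ a b, b ≤ a → a + b = 2 * n + 1 →
      (isBCollapse (conjugatePartition {a, b})
        (replicate (2 * k) 2 + replicate (2 * n - 4 * k + 1) 1) ↔ b = 2 * k ∨ b = 2 * k + 1) :=
    fun a b hba hab => isBCollapse_conjugatePartition_pair_iff hba (even_two_mul k) (by omega)
  constructor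
  · intro H
    have hr_sup : (replicate (2 * k) 2 + replicate (2 * n - 4 * k + 1) 1).sup = 2 := by
      rw [← partialSum_one_eq_sup, partialSum_replicate_add_replicate one_le_two]
      omega
    obtain ⟨a, b, hba, rfl⟩ := exists_eq_pair_of_card_eq_two
      (card_eq_two_of_isBCollapse_conjugatePartition hqpos H hr_sup)
    have hab : a + b = 2 * n + 1 := by simpa using hqsum
    rcases (hcollapse_pair a b hba hab).1 H with rfl | rfl
    · exact Or.inl (by rw [show a = 2 * n - 2 * k + 1 by omega])
    · exact Or.inr (by rw [show a = 2 * n - 2 * k by omega])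
  · rintro (rfl | rfl)
    · exact (hcollapse_pair _ _ (by omega) (by omega)).2 (Or.inl rfl)
    · exact (hcollapse_pair _ _ (by omega) (by omega)).2 (Or.inr rfl)

/-- Let `p = [2^{2k}, 1^{2n−4k+1}]` be a partition of `2n+1`
(type B spherical orbit, `k ≠ n/2`).  The partitions `q` of `2n+1` with at
most 2 distinct parts whose transposes B-collapse to `p` are exactly
`q = [2n−2k+1, 2k]` and `q = [2n−2k, 2k+1]`. -/
theorem stmt_7 (n k : ℕ) (hk : 1 ≤ k) (hkn : 2 * k ≤ n) (hne : 2 * k ≠ n)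
    (q : Multiset ℕ) (hqpos : ∀ x ∈ q, 0 < x) (hqsum : q.sum = 2 * n + 1)
    (hqparts : q.toFinset.card ≤ 2) :
    isBCollapse (conjugatePartition q)
        (Multiset.replicate (2 * k) 2 + Multiset.replicate (2 * n - 4 * k + 1) 1) ↔
      (q = {2 * n - 2 * k + 1, 2 * k} ∨ q = {2 * n - 2 * k, 2 * k + 1}) :=
  stmt_7_general n k hk hkn hne q hqpos hqsum
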